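/- Lower bound for Gradient Bandit probabilities: Let ε ∈ (0, 1), R > 0, θ ∈ [0, R], and T_ε = min( ⌊ log(√(1/(Kε))) · √n / R ⌋, n ). Then for every t ≤ T_ε and every action a ∈ [K], the Gradient Bandit probability satisfies π_t^θ(a) ≥ ε, for any sequences of rewards in [0,1] and actions in [K]. -/
import Mathlib


/-- Softmax distribution associated with a score vector. -/
noncomputable def softmax {ι : Type*} [Fintype ι] (h : ι → ℝ) (a : ι) : ℝ :=
  Real.exp (h a) / ∑ b, Real.exp (h b)

/-- Cumulative estimated rewards `G t b = Σ_{s=1}^t ĝ_{b,s}` of the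
`Gradient Bandit` algorithm with learning rate `θ/√n`, where
`ĝ_{b,s} = (1{A_s = b} − π_s(b)) g_{A_s,s}`. -/
noncomputable def gradBanditG (n K : ℕ) (g : Fin K → ℕ → ℝ) (A : ℕ → Fin K)
    (θ : ℝ) : ℕ → Fin K → ℝ
  | 0 => fun _ => 0
  | (t + 1) => fun b =>
      gradBanditG n K g A θ t b +
        ((if A (t + 1) = b then 1 else 0) -
            softmax (fun c => -(θ / Real.sqrt n) * gradBanditG n K g A θ t c) b) *
          g (A (t + 1)) (t + 1)

/-- The `Gradient Bandit` action probabilities: `π_1` is uniform and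
`π_{t+1} = softmax(−(θ/√n) Σ_{s≤t} ĝ_{·,s})`. -/
noncomputable def gradBanditPi (n K : ℕ) (g : Fin K → ℕ → ℝ) (A : ℕ → Fin K)
    (θ : ℝ) (t : ℕ) : Fin K → ℝ :=
  softmax (fun c => -(θ / Real.sqrt n) * gradBanditG n K g A θ (t - 1) c)

lemma softmax_mem_Icc {ι : Type*} [Fintype ι] [Nonempty ι] (h : ι → ℝ) (a : ι) :
    softmax h a ∈ Set.Icc (0:ℝ) 1 := by
  have hS : 0 < ∑ b, Real.exp (h b) :=
    Finset.sum_pos (fun b _ => Real.exp_pos _) Finset.univ_nonempty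
  unfold softmax
  constructor
  · exact div_nonneg (Real.exp_pos _).le hS.le
  · rw [div_le_one hS]
    exact Finset.single_le_sum (fun b _ => (Real.exp_pos _).le) (Finset.mem_univ a)

lemma softmax_ge {ι : Type*} [Fintype ι] (h : ι → ℝ) (a : ι) (M : ℝ)
    (hM : ∀ c, |h c| ≤ M) :
    Real.exp (-M) / (Fintype.card ι * Real.exp M) ≤ softmax h a := by
  have hS : 0 < ∑ b, Real.exp (h b) :=
    Finset.sum_pos (fun b _ => Real.exp_pos _) ⟨a, Finset.mem_univ a⟩
  have h1 : Real.exp (-M) ≤ Real.exp (h a) :=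
    Real.exp_le_exp.mpr (neg_le_of_abs_le (hM a))
  have h2 : (∑ b, Real.exp (h b)) ≤ Fintype.card ι * Real.exp M := by
    calc (∑ b, Real.exp (h b)) ≤ ∑ _b : ι, Real.exp M :=
          Finset.sum_le_sum (fun b _ => Real.exp_le_exp.mpr (le_of_abs_le (hM b)))
      _ = Fintype.card ι * Real.exp M := by
          rw [Finset.sum_const, nsmul_eq_mul]; rfl
  exact div_le_div₀ (Real.exp_pos _).le h1 hS h2

lemma gradBanditG_abs_le (n K : ℕ) (hK : 0 < K) (g : Fin K → ℕ → ℝ)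
    (hg : ∀ a t, g a t ∈ Set.Icc (0:ℝ) 1) (A : ℕ → Fin K) (θ : ℝ) :
    ∀ t b, |gradBanditG n K g A θ t b| ≤ t := by
  haveI : Nonempty (Fin K) := ⟨⟨0, hK⟩⟩
  intro t
  induction t with
  | zero => intro b; simp [gradBanditG]
  | succ t ih =>
    intro b
    have hπ := softmax_mem_Icc
      (fun c => -(θ / Real.sqrt n) * gradBanditG n K g A θ t c) b
    have hgm := hg (A (t + 1)) (t + 1)
    have hind : (if A (t + 1) = b then (1:ℝ) else 0) ∈ Set.Icc (0:ℝ) 1 := by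
      split <;> simp
    have hincr : |((if A (t + 1) = b then (1:ℝ) else 0) -
        softmax (fun c => -(θ / Real.sqrt n) * gradBanditG n K g A θ t c) b) *
        g (A (t + 1)) (t + 1)| ≤ 1 := by
      rw [abs_mul]
      have h1 : |(if A (t + 1) = b then (1:ℝ) else 0) -
          softmax (fun c => -(θ / Real.sqrt n) * gradBanditG n K g A θ t c) b| ≤ 1 := by
        rw [abs_le]
        obtain ⟨h2, h3⟩ := hπ
        obtain ⟨h4, h5⟩ := hind
        constructor <;> nlinarith
      have h2 : |g (A (t + 1)) (t + 1)| ≤ 1 := by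
        rw [abs_le]; obtain ⟨h4, h5⟩ := hgm; constructor <;> linarith
      calc _ ≤ 1 * 1 := mul_le_mul h1 h2 (abs_nonneg _) zero_le_one
        _ = 1 := mul_one 1
    have := ih b
    show |gradBanditG n K g A θ t b + _| ≤ _
    push_cast
    calc |gradBanditG n K g A θ t b + _| ≤ |gradBanditG n K g A θ t b| + _ := abs_add_le _ _
      _ ≤ (t : ℝ) + 1 := add_le_add this hincr

/-- lower bound for `Gradient Bandit` probabilities. For
`ε ∈ (0, 1)`, `θ ∈ [0, R]` and `T_ε = min(⌊log(√(1/(Kε))) √n / R⌋, n)`, one has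
`π_t(a) ≥ ε` for all `1 ≤ t ≤ T_ε` and all actions `a`. -/
theorem gradBandit_lower_bound (n K : ℕ) (hn : 1 ≤ n) (hK : 2 ≤ K)
    (g : Fin K → ℕ → ℝ) (hg : ∀ a t, g a t ∈ Set.Icc (0 : ℝ) 1)
    (A : ℕ → Fin K) (ε R θ : ℝ) (hε : 0 < ε) (hε1 : ε < 1) (hR : 0 < R)
    (hθ : θ ∈ Set.Icc 0 R)
    (Tε : ℕ)
    (hTε : Tε = min ⌊Real.log (Real.sqrt (1 / (K * ε))) * Real.sqrt n / R⌋₊ n) :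
    ∀ t, 1 ≤ t → t ≤ Tε → ∀ a, ε ≤ gradBanditPi n K g A θ t a := by
  intro t ht hTt a
  haveI : Nonempty (Fin K) := ⟨⟨0, by omega⟩⟩
  set L := Real.log (Real.sqrt (1 / (K * ε))) with hL
  set x := L * Real.sqrt n / R with hx
  have hKε : (0:ℝ) < K * ε := by positivity
  have hsn : (0:ℝ) < Real.sqrt n := Real.sqrt_pos.mpr (by exact_mod_cast hn)
  have hfloor1 : 1 ≤ ⌊x⌋₊ := by
    have h1 : 1 ≤ Tε := le_trans ht hTt
    rw [hTε] at h1
    exact le_trans h1 (min_le_left _ _)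
  have hx0 : (0:ℝ) ≤ x := by
    by_contra h
    push_neg at h
    rw [Nat.floor_of_nonpos h.le] at hfloor1
    omega
  have htx : (t:ℝ) ≤ x := by
    have h1 : t ≤ ⌊x⌋₊ := le_trans hTt (by rw [hTε]; exact min_le_left _ _)
    exact le_trans (by exact_mod_cast h1) (Nat.floor_le hx0)
  obtain ⟨hθ0, hθR⟩ := hθ
  set M : ℝ := θ / Real.sqrt n * ((t:ℝ) - 1) with hM
  have hM0 : 0 ≤ M := by
    apply mul_nonneg (div_nonneg hθ0 hsn.le)
    have : (1:ℝ) ≤ (t:ℝ) := by exact_mod_cast ht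
    linarith
  -- bound on the exponents
  have hGle : ∀ c, |gradBanditG n K g A θ (t - 1) c| ≤ ((t - 1 : ℕ) : ℝ) :=
    fun c => gradBanditG_abs_le n K (by omega) g hg A θ (t - 1) c
  have hcast : ((t - 1 : ℕ) : ℝ) = (t:ℝ) - 1 := by
    rw [Nat.cast_sub ht]; norm_num
  have habs : ∀ c, |-(θ / Real.sqrt n) * gradBanditG n K g A θ (t - 1) c| ≤ M := by
    intro c
    rw [abs_mul, abs_neg, abs_of_nonneg (div_nonneg hθ0 hsn.le)]
    rw [hM]
    apply mul_le_mul_of_nonneg_left _ (div_nonneg hθ0 hsn.le)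
    rw [← hcast]
    exact hGle c
  have hsm := softmax_ge (fun c => -(θ / Real.sqrt n) * gradBanditG n K g A θ (t - 1) c)
    a M habs
  rw [Fintype.card_fin] at hsm
  refine le_trans ?_ hsm
  -- it remains to show ε ≤ exp(-M)/(K * exp M)
  have h2M : 2 * M ≤ -Real.log (K * ε) := by
    have hLval : L = Real.log (1 / (K * ε)) / 2 := by
      rw [hL, Real.log_sqrt (by positivity)]
    have hlog : Real.log (1 / (K * ε)) = -Real.log (K * ε) := by
      rw [one_div, Real.log_inv]
    have hRt : R * (t:ℝ) ≤ L * Real.sqrt n := by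
      rw [hx, le_div_iff₀ hR] at htx
      nlinarith
    have hθt : θ * ((t:ℝ) - 1) ≤ R * (t:ℝ) := by
      have h1 : (1:ℝ) ≤ (t:ℝ) := by exact_mod_cast ht
      nlinarith
    have hMle : M ≤ L := by
      rw [hM, div_mul_eq_mul_div, div_le_iff₀ hsn]
      calc θ * ((t:ℝ) - 1) ≤ R * (t:ℝ) := hθt
        _ ≤ L * Real.sqrt n := hRt
    rw [hLval, hlog] at hMle
    linarith
  have hKε' : (K:ℝ) * ε ≤ Real.exp (-(2 * M)) := by
    calc (K:ℝ) * ε = Real.exp (Real.log ((K:ℝ) * ε)) := (Real.exp_log hKε).symm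
      _ ≤ Real.exp (-(2 * M)) := Real.exp_le_exp.mpr (by linarith)
  have hKexp : (0:ℝ) < (K:ℝ) * Real.exp M := by positivity
  rw [le_div_iff₀ hKexp]
  have hexp : Real.exp (-(2 * M)) * Real.exp M = Real.exp (-M) := by
    rw [← Real.exp_add]; ring_nf
  nlinarith [Real.exp_pos M, mul_le_mul_of_nonneg_right hKε' (Real.exp_pos M).le]
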